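/- For any x, x' in the closed unit ball of ℝⁿ, the vector ψ(x) lies in ℓ²(I) and ⟨ψ(x), ψ(x')⟩ = Σ_{j=0}^∞ 2^{−j}·(⟨x,x'⟩)^j = 1/(1 − (1/2)·⟨x,x'⟩). -/

import Mathlib

/-!
Up to the factor `2^{-j/2}`, the entries of `ψ(x)` are the monomials `x_{k₁}⋯x_{k_j}`, so
`ψ(x)_l ψ(x')_l` is the product over `l` of `r_k = x_k x'_k / 2`. Summing `∏_{i} r_{k_i}` over all
tuples of length `j` gives `(∑_k r_k)^j = (⟨x,x'⟩/2)^j`, and the sum over all tuples is the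
geometric series in `⟨x,x'⟩/2`. Absolute convergence, needed to regroup the sum by length, holds
because `∑_k |r_k| ≤ ‖x‖‖x'‖/2 < 1` by Cauchy–Schwarz.
-/

/-- The feature map `ψ`: the entry of `ψ(x)` at a tuple `(k₁,…,k_j)` (a list over
`{1,…,n}`) is `2^{-j/2}·x_{k₁}⋯x_{k_j}`. -/
noncomputable def psiFun (n : ℕ) (x : EuclideanSpace ℝ (Fin n)) (l : List (Fin n)) : ℝ :=
  (2 : ℝ) ^ (-(l.length : ℝ) / 2) * (l.map fun k => x k).prod

open Finset

theorem sum_prod_map_ofFn_eq_pow {R ι : Type*} [CommSemiring R] [Fintype ι] (r : ι → R) (j : ℕ) :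
    ∑ p : Fin j → ι, ((List.ofFn p).map r).prod = (∑ k, r k) ^ j := by
  simp only [List.map_ofFn, List.prod_ofFn, Fintype.sum_pow, Function.comp_apply]

theorem hasSum_list_prod_map {𝕜 ι : Type*} [NormedField 𝕜] [CompleteSpace 𝕜] [Fintype ι]
    (r : ι → 𝕜) (hr : ∑ k, ‖r k‖ < 1) :
    HasSum (fun l : List ι => (l.map r).prod) (1 - ∑ k, r k)⁻¹ := by
  rw [← List.equivSigmaTuple.symm.hasSum_iff]
  set F : (Σ j, Fin j → ι) → 𝕜 := fun p => ((List.ofFn p.2).map r).prod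
  have hF : ∀ j, HasSum (fun p : Fin j → ι => F ⟨j, p⟩) ((∑ k, r k) ^ j) := fun j => by
    rw [← sum_prod_map_ofFn_eq_pow]
    exact hasSum_fintype _
  have hnormF : ∀ j, ∑' p : Fin j → ι, ‖F ⟨j, p⟩‖ = (∑ k, ‖r k‖) ^ j := fun j => by
    simp only [F, List.norm_prod, List.map_map, tsum_fintype]
    exact sum_prod_map_ofFn_eq_pow (fun k => ‖r k‖) j
  have hFsummable : Summable F := by
    refine Summable.of_norm ((summable_sigma_of_nonneg fun _ => norm_nonneg _).2
      ⟨fun _ => Summable.of_finite, ?_⟩)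
    simpa only [hnormF] using summable_geometric_of_lt_one (by positivity) hr
  have hsum_lt : ‖∑ k, r k‖ < 1 := (norm_sum_le _ _).trans_lt hr
  rw [(hasSum_geometric_of_norm_lt_one hsum_lt).unique (hFsummable.hasSum.sigma hF)]
  exact hFsummable.hasSum

theorem EuclideanSpace.sum_abs_mul_le_norm_mul_norm {ι : Type*} [Fintype ι]
    (x y : EuclideanSpace ℝ ι) : ∑ i, |x i * y i| ≤ ‖x‖ * ‖y‖ := by
  simpa only [abs_mul, sq_abs, EuclideanSpace.norm_eq, Real.norm_eq_abs] using
    Real.sum_mul_le_sqrt_mul_sqrt univ (fun i => |x i|) (fun i => |y i|)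

theorem psiFun_eq_prod_map (n : ℕ) (x : EuclideanSpace ℝ (Fin n)) (l : List (Fin n)) :
    psiFun n x l = (l.map fun k => x k / √2).prod := by
  have h2 : (2 : ℝ) ^ (-(l.length : ℝ) / 2) = (√2 ^ l.length)⁻¹ := by
    rw [Real.sqrt_eq_rpow, ← Real.rpow_natCast, ← Real.rpow_mul zero_le_two,
      ← Real.rpow_neg zero_le_two]
    ring_nf
  rw [psiFun, h2, mul_comm]
  simp only [div_eq_mul_inv, List.prod_map_mul, List.map_const', List.prod_replicate, inv_pow]

theorem psiFun_mul_psiFun (n : ℕ) (x x' : EuclideanSpace ℝ (Fin n)) (l : List (Fin n)) :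
    psiFun n x l * psiFun n x' l = (l.map fun k => x k * x' k / 2).prod := by
  simp only [psiFun_eq_prod_map, ← List.prod_map_mul, div_mul_div_comm,
    Real.mul_self_sqrt zero_le_two]

theorem hasSum_psiFun_mul_psiFun {n : ℕ} {x x' : EuclideanSpace ℝ (Fin n)}
    (hxx' : ‖x‖ * ‖x'‖ < 2) :
    HasSum (fun l => psiFun n x l * psiFun n x' l) (1 - inner ℝ x x' / 2)⁻¹ := by
  have hr : ∑ k, ‖x k * x' k / 2‖ < 1 := by
    have := EuclideanSpace.sum_abs_mul_le_norm_mul_norm x x'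
    simp only [norm_div, Real.norm_eq_abs, abs_two, ← sum_div]
    linarith
  have hsum : ∑ k, x k * x' k / 2 = inner ℝ x x' / 2 := by
    simp [PiLp.inner_apply, mul_comm, sum_div]
  simpa only [psiFun_mul_psiFun, hsum] using hasSum_list_prod_map _ hr

theorem memℓp_two_psiFun {n : ℕ} {x : EuclideanSpace ℝ (Fin n)} (hx : ‖x‖ < √2) :
    Memℓp (psiFun n x) 2 := by
  have hxx : ‖x‖ * ‖x‖ < 2 := by rwa [← sq, ← Real.lt_sqrt (norm_nonneg x)]
  rw [memℓp_gen_iff (by norm_num)]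
  simpa only [ENNReal.toReal_ofNat, Real.rpow_two, Real.norm_eq_abs, sq, abs_mul_abs_self] using
    (hasSum_psiFun_mul_psiFun hxx).summable

/-- `ψ(x) ∈ ℓ²(I)` and `⟨ψ(x), ψ(x')⟩ = Σ_j 2^{-j}·⟨x,x'⟩^j
= 1/(1 - ⟨x,x'⟩/2)` for `x, x'` in the unit ball. -/
theorem psi_inner_eq_kernel
    (n : ℕ) (x x' : EuclideanSpace ℝ (Fin n)) (hx : ‖x‖ ≤ 1) (hx' : ‖x'‖ ≤ 1) :
    Memℓp (psiFun n x) 2 ∧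
      (∑' l, psiFun n x l * psiFun n x' l) =
        (∑' j : ℕ, (2 : ℝ) ^ (-(j : ℤ)) * (inner ℝ x x' : ℝ) ^ j) ∧
      (∑' l, psiFun n x l * psiFun n x' l) = 1 / (1 - (1 / 2) * (inner ℝ x x' : ℝ)) := by
  have hxx' : ‖x‖ * ‖x'‖ < 2 := by nlinarith [norm_nonneg x, norm_nonneg x']
  have hc : ‖(inner ℝ x x' : ℝ) / 2‖ < 1 := by
    rw [norm_div, Real.norm_eq_abs, Real.norm_two, div_lt_one two_pos]
    exact (abs_real_inner_le_norm x x').trans_lt hxx'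
  have hkernel := (hasSum_psiFun_mul_psiFun hxx').tsum_eq
  refine ⟨memℓp_two_psiFun (hx.trans_lt Real.one_lt_sqrt_two), ?_, ?_⟩
  · rw [hkernel, ← (hasSum_geometric_of_norm_lt_one hc).tsum_eq]
    congr with j
    rw [zpow_neg, zpow_natCast, div_pow, inv_mul_eq_div]
  · rw [hkernel]
    ring
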